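/- Let R > 0, ν > 1, and let l₁, l₂ > 0 with l₁ + l₂ = πR; set α₁ := sin(l₁/(2R)), α₂ := sin(l₂/(2R)), and h₊(x) := (1/ν)( −sin²[x/(2R)] + cos[x/(2R)]√(ν² − sin²[x/(2R)]) ). Then ∫₀^{l₁} ( h₊(σ) − h₊(σ + l₂) ) dσ = H(α₁,ν) + H(α₂,ν) − H(1,ν) + (R/ν)·sin(l₁/R), where H(α,ν) := R( (α/ν)√(ν² − α²) + ν arcsin(α/ν) ). -/

import Mathlib

open Real intervalIntegral

/-- `h₊(x) = (1/ν)(−sin²[x/(2R)] + cos[x/(2R)] √(ν² − sin²[x/(2R)]))`. -/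
noncomputable def hPlus (R ν x : ℝ) : ℝ :=
  (1 / ν) * (-(sin (x / (2 * R))) ^ 2
    + cos (x / (2 * R)) * Real.sqrt (ν ^ 2 - (sin (x / (2 * R))) ^ 2))

/-- `H(α,ν) = R((α/ν)√(ν² − α²) + ν arcsin(α/ν))`. -/
noncomputable def Hfun (R α ν : ℝ) : ℝ :=
  R * ((α / ν) * Real.sqrt (ν ^ 2 - α ^ 2) + ν * arcsin (α / ν))

/-!
Since `∂H/∂α (α, ν) = 2R √(ν² − α²) / ν`, the chain rule together with
`cos (x/R) = 1 − 2 sin² (x/(2R))` shows that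
`P(x) = (R sin (x/R) − x) / (2ν) + H(sin (x/(2R)), ν)` is a primitive of `h₊`.
Hence the integral equals `P(l₁) + P(l₂) − P(πR)`; here `P(πR) = H(1, ν) − πR/(2ν)`,
and `sin (l₂/R) = sin (π − l₁/R) = sin (l₁/R)`.
-/

theorem hasDerivAt_Hfun (R : ℝ) {α ν : ℝ} (hν : 0 < ν) (hα : |α| < ν) :
    HasDerivAt (fun a => Hfun R a ν) (2 * R * √(ν ^ 2 - α ^ 2) / ν) α := by
  have hq : 0 < ν ^ 2 - α ^ 2 := by
    nlinarith [sq_abs α, abs_nonneg α]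
  have hα' : |α / ν| < 1 := by rwa [abs_div, abs_of_pos hν, div_lt_one hν]
  have hsqrt :
      HasDerivAt (fun a => √(ν ^ 2 - a ^ 2)) (-(2 * α) / (2 * √(ν ^ 2 - α ^ 2))) α := by
    simpa using ((hasDerivAt_pow 2 α).const_sub (ν ^ 2)).sqrt hq.ne'
  have harcsin := (hasDerivAt_arcsin (abs_lt.1 hα').1.ne' (abs_lt.1 hα').2.ne).comp α
    ((hasDerivAt_id' α).div_const ν)
  have hsqrt_one_sub : √(1 - (α / ν) ^ 2) = √(ν ^ 2 - α ^ 2) / ν := by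
    rw [show 1 - (α / ν) ^ 2 = (ν ^ 2 - α ^ 2) / ν ^ 2 by field_simp,
      sqrt_div hq.le, sqrt_sq hν.le]
  refine ((((hasDerivAt_id' α).div_const ν).mul hsqrt).add (harcsin.const_mul ν)).const_mul R
    |>.congr_deriv ?_
  rw [hsqrt_one_sub]
  have ht : 0 < √(ν ^ 2 - α ^ 2) := sqrt_pos.2 hq
  field_simp
  rw [sq_sqrt hq.le]
  ring

noncomputable def hPlusPrimitive (R ν x : ℝ) : ℝ :=
  (R * sin (x / R) - x) / (2 * ν) + Hfun R (sin (x / (2 * R))) ν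

theorem hasDerivAt_hPlusPrimitive {R ν : ℝ} (hR : R ≠ 0) (hν : 1 < ν) (x : ℝ) :
    HasDerivAt (hPlusPrimitive R ν) (hPlus R ν x) x := by
  have hsin_lt : |sin (x / (2 * R))| < ν := (abs_sin_le_one _).trans_lt hν
  have hsin_half : HasDerivAt (fun y => sin (y / (2 * R))) (cos (x / (2 * R)) * (1 / (2 * R))) x :=
    (hasDerivAt_sin _).comp x ((hasDerivAt_id' x).div_const (2 * R))
  have hH := (hasDerivAt_Hfun R (one_pos.trans hν) hsin_lt).comp x hsin_half
  have hsin : HasDerivAt (fun y => sin (y / R)) (cos (x / R) * (1 / R)) x :=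
    (hasDerivAt_sin _).comp x ((hasDerivAt_id' x).div_const R)
  have hlin := ((hsin.const_mul R).sub (hasDerivAt_id' x)).div_const (2 * ν)
  unfold hPlusPrimitive
  refine (hlin.add hH).congr_deriv ?_
  have hcos : cos (x / R) = 1 - 2 * sin (x / (2 * R)) ^ 2 := by
    rw [show x / R = 2 * (x / (2 * R)) by field_simp, cos_two_mul, cos_sq']
    ring
  simp only [hPlus, hcos]
  field_simp
  ring

theorem continuous_hPlus (R ν : ℝ) : Continuous (hPlus R ν) := by
  unfold hPlus; fun_prop

theorem integral_hPlus {R ν : ℝ} (hR : R ≠ 0) (hν : 1 < ν) (a b : ℝ) :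
    ∫ x in a..b, hPlus R ν x = hPlusPrimitive R ν b - hPlusPrimitive R ν a :=
  integral_eq_sub_of_hasDerivAt (fun x _ => hasDerivAt_hPlusPrimitive hR hν x)
    ((continuous_hPlus R ν).intervalIntegrable a b)

theorem hPlusPrimitive_zero (R ν : ℝ) : hPlusPrimitive R ν 0 = 0 := by
  simp [hPlusPrimitive, Hfun]

theorem hPlusPrimitive_pi_mul {R : ℝ} (hR : R ≠ 0) (ν : ℝ) :
    hPlusPrimitive R ν (π * R) = Hfun R 1 ν - π * R / (2 * ν) := by
  rw [hPlusPrimitive, show π * R / R = π by field_simp,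
    show π * R / (2 * R) = π / 2 by field_simp, sin_pi, sin_pi_div_two]
  ring

theorem integral_h_nearest_neighbor_general (R ν l₁ l₂ : ℝ) (hR : 0 < R) (hν : 1 < ν)
    (hsum : l₁ + l₂ = π * R) :
    ∫ σ in (0 : ℝ)..l₁, (hPlus R ν σ - hPlus R ν (σ + l₂)) =
      Hfun R (sin (l₁ / (2 * R))) ν + Hfun R (sin (l₂ / (2 * R))) ν
        - Hfun R 1 ν + (R / ν) * sin (l₁ / R) := by
  have hsin : sin (l₂ / R) = sin (l₁ / R) := by
    rw [show l₂ / R = π - l₁ / R by field_simp; linarith, sin_pi_sub]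
  have hcont := continuous_hPlus R ν
  have hshift : IntervalIntegrable (fun σ => hPlus R ν (σ + l₂)) MeasureTheory.volume 0 l₁ :=
    (hcont.comp (continuous_add_const l₂)).intervalIntegrable 0 l₁
  rw [integral_sub (hcont.intervalIntegrable 0 l₁) hshift,
    integral_comp_add_right (hPlus R ν), integral_hPlus hR.ne' hν, integral_hPlus hR.ne' hν,
    zero_add, hsum, hPlusPrimitive_zero, hPlusPrimitive_pi_mul hR.ne']
  simp only [hPlusPrimitive, hsin]
  field_simp
  linear_combination -hsum

/-- For `ν > 1` and `l₁, l₂ > 0` with `l₁ + l₂ = πR`, with `α₁ = sin(l₁/(2R))`,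
`α₂ = sin(l₂/(2R))`, one has
`∫₀^{l₁} (h₊(σ) − h₊(σ + l₂)) dσ = H(α₁,ν) + H(α₂,ν) − H(1,ν) + (R/ν) sin(l₁/R)`. -/
theorem integral_h_nearest_neighbor (R ν l₁ l₂ : ℝ) (hR : 0 < R) (hν : 1 < ν)
    (hl₁ : 0 < l₁) (hl₂ : 0 < l₂) (hsum : l₁ + l₂ = π * R) :
    ∫ σ in (0 : ℝ)..l₁, (hPlus R ν σ - hPlus R ν (σ + l₂)) =
      Hfun R (sin (l₁ / (2 * R))) ν + Hfun R (sin (l₂ / (2 * R))) ν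
        - Hfun R 1 ν + (R / ν) * sin (l₁ / R) :=
  integral_h_nearest_neighbor_general R ν l₁ l₂ hR hν hsum
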